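/- With μ_θ = β^{1/p}θ^{-1/p}, m_θ as above, and j_θ(m) = θ√(m − μ_θ) + (1−θ)√m, the quantity c*_∞(θ) := m_θ/j_θ(m_θ) tends to +∞ as θ → 0⁺. -/

import Mathlib

/-!
Since `√(m - μ) ≤ √m`, the convex combination `j_θ(m)` is at most `√m`, so `m / j_θ(m) ≥ √m`.
The denominator of `m_θ` is at most `8θ²` (AM–GM on `(1 - θ)·√(9θ² - 2θ + 1)`), so `m_θ ≥ μ_θ`.
Hence `c*_∞(θ) ≥ √μ_θ = β^{1/(2p)} θ^{-1/(2p)} → ∞`.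
-/

open Filter Topology

/-- The denominator of `m_θ`. -/
noncomputable def mDenom (θ : ℝ) : ℝ :=
  3 * θ ^ 2 + 2 * θ - 1 + (1 - θ) * √(9 * θ ^ 2 - 2 * θ + 1)

lemma mDenom_le (θ : ℝ) : mDenom θ ≤ 8 * θ ^ 2 := by
  have hs : √(9 * θ ^ 2 - 2 * θ + 1) ^ 2 = 9 * θ ^ 2 - 2 * θ + 1 :=
    Real.sq_sqrt (by nlinarith [sq_nonneg (3 * θ - 1)])
  unfold mDenom
  nlinarith [sq_nonneg (√(9 * θ ^ 2 - 2 * θ + 1) - (1 - θ))]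

lemma four_mul_sq_le_mDenom {θ : ℝ} (hθ : θ ≤ 1) : 4 * θ ^ 2 ≤ mDenom θ := by
  have hs : 1 - θ ≤ √(9 * θ ^ 2 - 2 * θ + 1) :=
    Real.le_sqrt_of_sq_le (by nlinarith [sq_nonneg θ])
  unfold mDenom
  nlinarith [mul_le_mul_of_nonneg_left hs (sub_nonneg.mpr hθ)]

lemma le_mul_div_mDenom {μ θ : ℝ} (hμ : 0 ≤ μ) (hθ0 : 0 < θ) (hθ1 : θ ≤ 1) :
    μ ≤ 8 * μ * θ ^ 2 / mDenom θ := by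
  have hD : 0 < mDenom θ := (by positivity : (0 : ℝ) < 4 * θ ^ 2).trans_le
    (four_mul_sq_le_mDenom hθ1)
  rw [le_div_iff₀ hD]
  nlinarith [mul_le_mul_of_nonneg_left (mDenom_le θ) hμ]

lemma mul_sqrt_sub_add_mul_sqrt_le_sqrt {θ μ m : ℝ} (hθ0 : 0 ≤ θ) (hμ : 0 ≤ μ) :
    θ * √(m - μ) + (1 - θ) * √m ≤ √m := by
  nlinarith [mul_le_mul_of_nonneg_left (Real.sqrt_le_sqrt (by linarith : m - μ ≤ m)) hθ0]

lemma sqrt_le_div_mul_sqrt_sub_add_mul_sqrt {θ μ m : ℝ} (hθ0 : 0 ≤ θ) (hθ1 : θ < 1)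
    (hμ : 0 ≤ μ) (hm : 0 < m) : √m ≤ m / (θ * √(m - μ) + (1 - θ) * √m) := by
  have hj : 0 < θ * √(m - μ) + (1 - θ) * √m := by
    have := Real.sqrt_pos.mpr hm
    have := Real.sqrt_nonneg (m - μ)
    nlinarith
  calc √m = m / √m := (Real.div_sqrt).symm
    _ ≤ m / (θ * √(m - μ) + (1 - θ) * √m) :=
      div_le_div_of_nonneg_left hm.le hj (mul_sqrt_sub_add_mul_sqrt_le_sqrt hθ0 hμ)

theorem stmt_9 (β p : ℝ) (hβ : 0 < β) (hp : 1 < p) :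
    Tendsto (fun θ : ℝ =>
      let μ := β ^ (1 / p) * θ ^ (-(1 / p))
      let m := 8 * μ * θ ^ 2 /
        (3 * θ ^ 2 + 2 * θ - 1 + (1 - θ) * Real.sqrt (9 * θ ^ 2 - 2 * θ + 1))
      m / (θ * Real.sqrt (m - μ) + (1 - θ) * Real.sqrt m))
      (nhdsWithin 0 (Set.Ioi 0)) atTop := by
  have hμ_tendsto : Tendsto (fun θ : ℝ => β ^ (1 / p) * θ ^ (-(1 / p))) (𝓝[>] 0) atTop :=
    (tendsto_rpow_neg_nhdsGT_zero (neg_lt_zero.mpr (one_div_pos.mpr (by linarith)))).const_mul_atTop (by positivity)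
  refine tendsto_atTop_mono' _ ?_ (Real.tendsto_sqrt_atTop.comp hμ_tendsto)
  filter_upwards [Ioo_mem_nhdsGT one_pos] with θ ⟨hθ0, hθ1⟩
  have hμ : 0 < β ^ (1 / p) * θ ^ (-(1 / p)) := by positivity
  have hμm := le_mul_div_mDenom hμ.le hθ0 hθ1.le
  exact (Real.sqrt_le_sqrt hμm).trans
    (sqrt_le_div_mul_sqrt_sub_add_mul_sqrt hθ0.le hθ1 hμ.le (hμ.trans_le hμm))
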